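/- arXiv:1403.0781 — 2 statements merged into one kernel-verified Lean document; each statement's English description precedes it below -/
import Mathlib

section
/- Fix R ≥ 6 and work on the space with coordinates x, y, u_r (0 ≤ r ≤ R) and v_{rs} (0 ≤ r, s ≤ R). Let F be a smooth function of the seven variables (x, y, u₀, v₀₀, u₁, v₁₀, v₀₁), regarded as a function on this space, and define the total derivatives on smooth functions by D_x f = ∂f/∂x + Σ_{r<R} u_{r+1}∂f/∂u_r + Σ_{r<R, s≤R} v_{r+1,s}∂f/∂v_{rs} and D_y f = ∂f/∂y + Σ_{r<R} (D_x^r F)∂f/∂u_r + Σ_{r≤R, s<R} v_{r,s+1}∂f/∂v_{rs}. Write F_u = ∂F/∂u₀, F_v = ∂F/∂v₀₀, F_{u₁} = ∂F/∂u₁, F_{v_x} = ∂F/∂v₁₀, F_{v_y} = ∂F/∂v₀₁, and set A := F_v + F_u F_{v_y} − D_y F_{v_y} + F_{u₁} D_x F_{v_y} and B := F_{v_x} + F_{u₁} F_{v_y}. Let z and b be smooth functions depending only on x, y, the u_r with r ≤ R−3 and the v_{rs} with r, s ≤ R−3, and set c := z − F_{v_y}·b. Then the identity D_y c − (F_u c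 + A b + B D_x b + F_{u₁} D_x c) = D_y z − (F_u z + F_v b + F_{u₁} D_x z + F_{v_x} D_x b + F_{v_y} D_y b) holds; in particular, z and b satisfy D_y z = F_u z + F_v b + F_{u₁} D_x z + F_{v_x} D_x b + F_{v_y} D_y b if and only if c and b satisfy D_y c = F_u c + A b + B D_x b + F_{u₁} D_x c. -/
/-!
Section 4.1: reduction of the variational requirement for the equation
`∂u/∂y = F(x, y, u, v, ∂u/∂x, ∂v/∂x, ∂v/∂y)`.  The space is a truncation of
the jet space, with coordinates `x, y, u_r (0 ≤ r ≤ R), v_{rs} (0 ≤ r,s ≤ R)`.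
-/

noncomputable section

open scoped BigOperators

/-- Index set of the coordinates `x, y, u_r, v_{rs}`. -/
abbrev JCoord (R : ℕ) := Unit ⊕ Unit ⊕ Fin (R + 1) ⊕ (Fin (R + 1) × Fin (R + 1))

/-- A point of the truncated jet space. -/
abbrev JPt (R : ℕ) := JCoord R → ℝ

/-- The coordinate `x`. -/
def jx (R : ℕ) : JCoord R := Sum.inl ()
/-- The coordinate `y`. -/
def jy (R : ℕ) : JCoord R := Sum.inr (Sum.inl ())
/-- The coordinate `u_r` (representing `∂ʳu/∂xʳ`). -/
def ju (R r : ℕ) (h : r < R + 1) : JCoord R := Sum.inr (Sum.inr (Sum.inl ⟨r, h⟩))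
/-- The coordinate `v_{rs}` (representing `∂^{r+s}v/∂xʳ∂yˢ`). -/
def jv (R r s : ℕ) (hr : r < R + 1) (hs : s < R + 1) : JCoord R :=
  Sum.inr (Sum.inr (Sum.inr (⟨r, hr⟩, ⟨s, hs⟩)))

/-- The partial derivative `∂f/∂(coordinate i)` at a point. -/
def jpd {R : ℕ} (i : JCoord R) (f : JPt R → ℝ) (p : JPt R) : ℝ :=
  fderiv ℝ f p (Pi.single i 1)

/-- The total derivative
`D_x f = ∂f/∂x + Σ_{r<R} u_{r+1}∂f/∂u_r + Σ_{r<R, s≤R} v_{r+1,s}∂f/∂v_{rs}`. -/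
def Dx {R : ℕ} (f : JPt R → ℝ) : JPt R → ℝ := fun p =>
  jpd (jx R) f p
    + (∑ r : Fin (R + 1),
        (if h : (r : ℕ) + 1 < R + 1 then p (ju R ((r : ℕ) + 1) h) else 0)
          * jpd (ju R r r.isLt) f p)
    + ∑ r : Fin (R + 1), ∑ s : Fin (R + 1),
        (if h : (r : ℕ) + 1 < R + 1 then p (jv R ((r : ℕ) + 1) s h s.isLt) else 0)
          * jpd (jv R r s r.isLt s.isLt) f p

/-- The total derivative
`D_y f = ∂f/∂y + Σ_{r<R} (D_xʳF)∂f/∂u_r + Σ_{r≤R, s<R} v_{r,s+1}∂f/∂v_{rs}`. -/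
def Dy {R : ℕ} (F : JPt R → ℝ) (f : JPt R → ℝ) : JPt R → ℝ := fun p =>
  jpd (jy R) f p
    + (∑ r : Fin (R + 1),
        (if (r : ℕ) < R then (Dx^[(r : ℕ)] F) p else 0) * jpd (ju R r r.isLt) f p)
    + ∑ r : Fin (R + 1), ∑ s : Fin (R + 1),
        (if h : (s : ℕ) + 1 < R + 1 then p (jv R r ((s : ℕ) + 1) r.isLt h) else 0)
          * jpd (jv R r s r.isLt s.isLt) f p

/-- `F_u = ∂F/∂u₀`. -/
def Fu {R : ℕ} (hR : 6 ≤ R) (F : JPt R → ℝ) : JPt R → ℝ :=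
  jpd (ju R 0 (by omega)) F
/-- `F_v = ∂F/∂v₀₀`. -/
def Fv {R : ℕ} (hR : 6 ≤ R) (F : JPt R → ℝ) : JPt R → ℝ :=
  jpd (jv R 0 0 (by omega) (by omega)) F
/-- `F_{u₁} = ∂F/∂u₁`. -/
def Fu1 {R : ℕ} (hR : 6 ≤ R) (F : JPt R → ℝ) : JPt R → ℝ :=
  jpd (ju R 1 (by omega)) F
/-- `F_{v_x} = ∂F/∂v₁₀`. -/
def Fvx {R : ℕ} (hR : 6 ≤ R) (F : JPt R → ℝ) : JPt R → ℝ :=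
  jpd (jv R 1 0 (by omega) (by omega)) F
/-- `F_{v_y} = ∂F/∂v₀₁`. -/
def Fvy {R : ℕ} (hR : 6 ≤ R) (F : JPt R → ℝ) : JPt R → ℝ :=
  jpd (jv R 0 1 (by omega) (by omega)) F

/-- `A := F_v + F_u F_{v_y} - D_y F_{v_y} + F_{u₁} D_x F_{v_y}`. -/
def Acoef {R : ℕ} (hR : 6 ≤ R) (F : JPt R → ℝ) : JPt R → ℝ := fun p =>
  Fv hR F p + Fu hR F p * Fvy hR F p - Dy F (Fvy hR F) p
    + Fu1 hR F p * Dx (Fvy hR F) p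

/-- `B := F_{v_x} + F_{u₁} F_{v_y}`. -/
def Bcoef {R : ℕ} (hR : 6 ≤ R) (F : JPt R → ℝ) : JPt R → ℝ := fun p =>
  Fvx hR F p + Fu1 hR F p * Fvy hR F p

/-- The vector field generating `Dx`. -/
def wx (R : ℕ) (p : JPt R) : JPt R :=
  (Pi.single (jx R) 1 : JPt R)
    + (∑ r : Fin (R + 1),
        (if h : (r : ℕ) + 1 < R + 1 then p (ju R ((r : ℕ) + 1) h) else 0)
          • (Pi.single (ju R r r.isLt) 1 : JPt R))
    + ∑ r : Fin (R + 1), ∑ s : Fin (R + 1),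
        (if h : (r : ℕ) + 1 < R + 1 then p (jv R ((r : ℕ) + 1) s h s.isLt) else 0)
          • (Pi.single (jv R r s r.isLt s.isLt) 1 : JPt R)

/-- The vector field generating `Dy`. -/
def wy {R : ℕ} (F : JPt R → ℝ) (p : JPt R) : JPt R :=
  (Pi.single (jy R) 1 : JPt R)
    + (∑ r : Fin (R + 1),
        (if (r : ℕ) < R then (Dx^[(r : ℕ)] F) p else 0) • (Pi.single (ju R r r.isLt) 1 : JPt R))
    + ∑ r : Fin (R + 1), ∑ s : Fin (R + 1),
        (if h : (s : ℕ) + 1 < R + 1 then p (jv R r ((s : ℕ) + 1) r.isLt h) else 0)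
          • (Pi.single (jv R r s r.isLt s.isLt) 1 : JPt R)

lemma Dx_eq {R : ℕ} (f : JPt R → ℝ) (p : JPt R) :
    Dx f p = fderiv ℝ f p (wx R p) := by
  simp [Dx, wx, jpd, map_add, map_sum, smul_eq_mul, ite_mul, dite_mul, mul_ite, mul_dite, zero_mul, mul_zero,
    apply_dite (fderiv ℝ f p), apply_ite (fderiv ℝ f p), map_zero, map_smul]

lemma Dy_eq {R : ℕ} (F f : JPt R → ℝ) (p : JPt R) :
    Dy F f p = fderiv ℝ f p (wy F p) := by
  simp [Dy, wy, jpd, map_add, map_sum, smul_eq_mul, ite_mul, dite_mul, mul_ite, mul_dite, zero_mul, mul_zero,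
    apply_dite (fderiv ℝ f p), apply_ite (fderiv ℝ f p), map_zero, map_smul]

lemma Dx_sub {R : ℕ} {f g : JPt R → ℝ} {p : JPt R}
    (hf : DifferentiableAt ℝ f p) (hg : DifferentiableAt ℝ g p) :
    Dx (f - g) p = Dx f p - Dx g p := by
  have h : fderiv ℝ (f - g) p = fderiv ℝ f p - fderiv ℝ g p := fderiv_sub hf hg
  rw [Dx_eq, Dx_eq, Dx_eq, h]; simp

lemma Dy_sub {R : ℕ} (F : JPt R → ℝ) {f g : JPt R → ℝ} {p : JPt R}
    (hf : DifferentiableAt ℝ f p) (hg : DifferentiableAt ℝ g p) :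
    Dy F (f - g) p = Dy F f p - Dy F g p := by
  have h : fderiv ℝ (f - g) p = fderiv ℝ f p - fderiv ℝ g p := fderiv_sub hf hg
  rw [Dy_eq, Dy_eq, Dy_eq, h]; simp

lemma Dx_mul {R : ℕ} {f g : JPt R → ℝ} {p : JPt R}
    (hf : DifferentiableAt ℝ f p) (hg : DifferentiableAt ℝ g p) :
    Dx (f * g) p = Dx f p * g p + f p * Dx g p := by
  have h : fderiv ℝ (f * g) p = f p • fderiv ℝ g p + g p • fderiv ℝ f p :=
    fderiv_mul hf hg
  rw [Dx_eq, Dx_eq, Dx_eq, h]; simp [smul_eq_mul]; ring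

lemma Dy_mul {R : ℕ} (F : JPt R → ℝ) {f g : JPt R → ℝ} {p : JPt R}
    (hf : DifferentiableAt ℝ f p) (hg : DifferentiableAt ℝ g p) :
    Dy F (f * g) p = Dy F f p * g p + f p * Dy F g p := by
  have h : fderiv ℝ (f * g) p = f p • fderiv ℝ g p + g p • fderiv ℝ f p :=
    fderiv_mul hf hg
  rw [Dy_eq, Dy_eq, Dy_eq, h]; simp [smul_eq_mul]; ring

lemma contDiff_jpd {R : ℕ} (i : JCoord R) {f : JPt R → ℝ} (hf : ContDiff ℝ (⊤ : ℕ∞) f) :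
    ContDiff ℝ (⊤ : ℕ∞) (jpd i f) := by
  have h1 : ContDiff ℝ (⊤ : ℕ∞) (fderiv ℝ f) := hf.fderiv_right (by simp)
  exact (ContinuousLinearMap.apply ℝ ℝ (Pi.single i 1 : JPt R)).contDiff.comp h1

/-- Section 4.1: with `c := z - F_{v_y}·b`, the defect of the reduced
requirement (4.4) equals the defect of the original variational requirement;
in particular the two requirements are equivalent. -/
theorem variational_reduction (R : ℕ) (hR : 6 ≤ R) (F : JPt R → ℝ)
    (hF : ContDiff ℝ (⊤ : ℕ∞) F)
    (hFdep : ∀ p q : JPt R, p (jx R) = q (jx R) → p (jy R) = q (jy R) →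
      p (ju R 0 (by omega)) = q (ju R 0 (by omega)) →
      p (ju R 1 (by omega)) = q (ju R 1 (by omega)) →
      p (jv R 0 0 (by omega) (by omega)) = q (jv R 0 0 (by omega) (by omega)) →
      p (jv R 1 0 (by omega) (by omega)) = q (jv R 1 0 (by omega) (by omega)) →
      p (jv R 0 1 (by omega) (by omega)) = q (jv R 0 1 (by omega) (by omega)) →
      F p = F q)
    (z b : JPt R → ℝ) (hz : ContDiff ℝ (⊤ : ℕ∞) z) (hb : ContDiff ℝ (⊤ : ℕ∞) b)
    (hzdep : ∀ p q : JPt R, p (jx R) = q (jx R) → p (jy R) = q (jy R) →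
      (∀ (r : ℕ) (h : r < R + 1), r ≤ R - 3 → p (ju R r h) = q (ju R r h)) →
      (∀ (r s : ℕ) (hr : r < R + 1) (hs : s < R + 1), r ≤ R - 3 → s ≤ R - 3 →
        p (jv R r s hr hs) = q (jv R r s hr hs)) →
      z p = z q)
    (hbdep : ∀ p q : JPt R, p (jx R) = q (jx R) → p (jy R) = q (jy R) →
      (∀ (r : ℕ) (h : r < R + 1), r ≤ R - 3 → p (ju R r h) = q (ju R r h)) →
      (∀ (r s : ℕ) (hr : r < R + 1) (hs : s < R + 1), r ≤ R - 3 → s ≤ R - 3 →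
        p (jv R r s hr hs) = q (jv R r s hr hs)) →
      b p = b q) :
    (∀ p : JPt R,
      Dy F (fun q => z q - Fvy hR F q * b q) p
        - (Fu hR F p * (z p - Fvy hR F p * b p) + Acoef hR F p * b p
            + Bcoef hR F p * Dx b p
            + Fu1 hR F p * Dx (fun q => z q - Fvy hR F q * b q) p)
      = Dy F z p
        - (Fu hR F p * z p + Fv hR F p * b p + Fu1 hR F p * Dx z p
            + Fvx hR F p * Dx b p + Fvy hR F p * Dy F b p))
    ∧ ((∀ p : JPt R,
          Dy F z p = Fu hR F p * z p + Fv hR F p * b p + Fu1 hR F p * Dx z p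
            + Fvx hR F p * Dx b p + Fvy hR F p * Dy F b p)
        ↔ ∀ p : JPt R,
          Dy F (fun q => z q - Fvy hR F q * b q) p
            = Fu hR F p * (z p - Fvy hR F p * b p) + Acoef hR F p * b p
              + Bcoef hR F p * Dx b p
              + Fu1 hR F p * Dx (fun q => z q - Fvy hR F q * b q) p) := by

  have hVy : ContDiff ℝ (⊤ : ℕ∞) (Fvy hR F) := contDiff_jpd _ hF
  have key : ∀ p : JPt R,
      Dy F (fun q => z q - Fvy hR F q * b q) p
        - (Fu hR F p * (z p - Fvy hR F p * b p) + Acoef hR F p * b p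
            + Bcoef hR F p * Dx b p
            + Fu1 hR F p * Dx (fun q => z q - Fvy hR F q * b q) p)
      = Dy F z p
        - (Fu hR F p * z p + Fv hR F p * b p + Fu1 hR F p * Dx z p
            + Fvx hR F p * Dx b p + Fvy hR F p * Dy F b p) := by
    intro p
    have dz : DifferentiableAt ℝ z p := (hz.differentiable (by simp)) p
    have db : DifferentiableAt ℝ b p := (hb.differentiable (by simp)) p
    have dV : DifferentiableAt ℝ (Fvy hR F) p := (hVy.differentiable (by simp)) p
    have hc : (fun q => z q - Fvy hR F q * b q) = z - Fvy hR F * b := rfl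
    have e1 : Dy F (fun q => z q - Fvy hR F q * b q) p
        = Dy F z p - (Dy F (Fvy hR F) p * b p + Fvy hR F p * Dy F b p) := by
      have dVb : DifferentiableAt ℝ (Fvy hR F * b) p := dV.mul db
      rw [hc, Dy_sub F dz dVb, Dy_mul F dV db]
    have e2 : Dx (fun q => z q - Fvy hR F q * b q) p
        = Dx z p - (Dx (Fvy hR F) p * b p + Fvy hR F p * Dx b p) := by
      have dVb : DifferentiableAt ℝ (Fvy hR F * b) p := dV.mul db
      rw [hc, Dx_sub dz dVb, Dx_mul dV db]
    rw [e1, e2]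
    simp only [Acoef, Bcoef]
    ring
  refine ⟨key, ?_⟩
  constructor
  · intro h p; have h1 := key p; have h2 := h p; linarith
  · intro h p; have h1 := key p; have h2 := h p; linarith
end
end

section
/- Fix N ≥ 9 and work on ℝ^{N+1} with coordinates (q₀, q₁, …, q_N), with 𝒟f = Σ_{r<N} q_{r+1}∂f/∂q_r. For every λ ∈ ℝ, the function B := λ² − ½q₀λ + ⅛(q₂ + 3q₀²) satisfies ½𝒟³B + 2(λ+q₀)𝒟B + q₁B = (1/16)(q₅ + 10q₀q₃ + 20q₁q₂ + 30q₀²q₁) = (1/16)𝒟(q₄ + 5q₁² + 10q₀q₂ + 10q₀³); in particular the left-hand side does not depend on λ. -/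
/-!
`𝒟` is the derivative along the vector field `p ↦ (p₁, …, p_N, 0)`, hence a derivation on
differentiable functions with `𝒟 q_i = q_{i+1}` for `i < N`. As `N ≥ 9`, every coordinate that
occurs is differentiated without truncation, and both identities become polynomial identities
in `q₀, …, q₅`.
-/

noncomputable section

open scoped BigOperators

/-- A point of `ℝ^{N+1}`, with coordinates `q₀, …, q_N`. -/
abbrev QPt (N : ℕ) := Fin (N + 1) → ℝ

/-- The partial derivative `∂f/∂q_i` at a point. -/
def qpd {N : ℕ} (i : Fin (N + 1)) (f : QPt N → ℝ) (p : QPt N) : ℝ :=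
  fderiv ℝ f p (Pi.single i 1)

/-- The truncated total derivative `𝒟f = Σ_{r<N} q_{r+1}∂f/∂q_r`. -/
def 𝒟 {N : ℕ} (f : QPt N → ℝ) : QPt N → ℝ := fun p =>
  ∑ r : Fin (N + 1),
    (if h : (r : ℕ) + 1 < N + 1 then p ⟨(r : ℕ) + 1, h⟩ else 0) * qpd r f p

section Derivation

variable {N : ℕ}

/-- The vector field `q_r ↦ q_{r+1}` (with `q_{N+1} := 0`) along which `𝒟` differentiates. -/
def QPt.shift (p : QPt N) : QPt N := fun r =>
  if h : (r : ℕ) + 1 < N + 1 then p ⟨(r : ℕ) + 1, h⟩ else 0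

theorem 𝒟_apply_eq_fderiv (f : QPt N → ℝ) (p : QPt N) :
    𝒟 f p = fderiv ℝ f p p.shift := by
  classical
  conv_rhs => rw [pi_eq_sum_univ' p.shift]
  simp only [𝒟, qpd, map_sum, map_smul, smul_eq_mul, QPt.shift]

theorem 𝒟_const (c : ℝ) : 𝒟 (fun _ : QPt N => c) = fun _ => 0 := by
  funext p
  simp [𝒟_apply_eq_fderiv]

theorem 𝒟_coord (i : ℕ) (hi : i + 1 < N + 1) :
    𝒟 (fun q : QPt N => q ⟨i, by omega⟩) = fun q => q ⟨i + 1, hi⟩ := by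
  funext p
  rw [𝒟_apply_eq_fderiv, fderiv_apply differentiableAt_id]
  simp [QPt.shift, hi]

variable {f g : QPt N → ℝ}

theorem 𝒟_add (hf : Differentiable ℝ f) (hg : Differentiable ℝ g) :
    𝒟 (fun q => f q + g q) = fun q => 𝒟 f q + 𝒟 g q := by
  funext p
  simp [𝒟_apply_eq_fderiv, fderiv_fun_add (hf p) (hg p)]

theorem 𝒟_sub (hf : Differentiable ℝ f) (hg : Differentiable ℝ g) :
    𝒟 (fun q => f q - g q) = fun q => 𝒟 f q - 𝒟 g q := by
  funext p
  simp [𝒟_apply_eq_fderiv, fderiv_fun_sub (hf p) (hg p)]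

theorem 𝒟_mul (hf : Differentiable ℝ f) (hg : Differentiable ℝ g) :
    𝒟 (fun q => f q * g q) = fun q => 𝒟 f q * g q + f q * 𝒟 g q := by
  funext p
  simp [𝒟_apply_eq_fderiv, fderiv_fun_mul (hf p) (hg p)]
  ring

theorem 𝒟_pow (hf : Differentiable ℝ f) (n : ℕ) :
    𝒟 (fun q => f q ^ n) = fun q => n * f q ^ (n - 1) * 𝒟 f q := by
  funext p
  simp [𝒟_apply_eq_fderiv, fderiv_fun_pow n (hf p)]

end Derivation

/-- The second nontrivial member of the KdV hierarchy: for
`B = λ² - ½q₀λ + ⅛(q₂ + 3q₀²)`,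
`½𝒟³B + 2(λ+q₀)𝒟B + q₁B = (1/16)(q₅ + 10q₀q₃ + 20q₁q₂ + 30q₀²q₁)
  = (1/16)𝒟(q₄ + 5q₁² + 10q₀q₂ + 10q₀³)`;
in particular the left-hand side does not depend on `λ`. -/
theorem kdv_second (N : ℕ) (hN : 9 ≤ N) (lam : ℝ) :
    ∀ p : QPt N,
      (1 / 2) * 𝒟 (𝒟 (𝒟 (fun q => lam ^ 2 - (1 / 2) * q ⟨0, by omega⟩ * lam
            + (1 / 8) * (q ⟨2, by omega⟩ + 3 * (q ⟨0, by omega⟩) ^ 2)))) p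
          + 2 * (lam + p ⟨0, by omega⟩)
            * 𝒟 (fun q => lam ^ 2 - (1 / 2) * q ⟨0, by omega⟩ * lam
                + (1 / 8) * (q ⟨2, by omega⟩ + 3 * (q ⟨0, by omega⟩) ^ 2)) p
          + p ⟨1, by omega⟩ * (lam ^ 2 - (1 / 2) * p ⟨0, by omega⟩ * lam
              + (1 / 8) * (p ⟨2, by omega⟩ + 3 * (p ⟨0, by omega⟩) ^ 2))
        = (1 / 16) * (p ⟨5, by omega⟩ + 10 * p ⟨0, by omega⟩ * p ⟨3, by omega⟩
            + 20 * p ⟨1, by omega⟩ * p ⟨2, by omega⟩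
            + 30 * (p ⟨0, by omega⟩) ^ 2 * p ⟨1, by omega⟩)
      ∧ (1 / 16) * (p ⟨5, by omega⟩ + 10 * p ⟨0, by omega⟩ * p ⟨3, by omega⟩
            + 20 * p ⟨1, by omega⟩ * p ⟨2, by omega⟩
            + 30 * (p ⟨0, by omega⟩) ^ 2 * p ⟨1, by omega⟩)
        = (1 / 16) * 𝒟 (fun q => q ⟨4, by omega⟩ + 5 * (q ⟨1, by omega⟩) ^ 2
            + 10 * q ⟨0, by omega⟩ * q ⟨2, by omega⟩
            + 10 * (q ⟨0, by omega⟩) ^ 3) p := by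
  intro p
  simp (disch := first | fun_prop | omega) only [𝒟_add, 𝒟_sub, 𝒟_mul, 𝒟_pow, 𝒟_const,
    𝒟_coord, Nat.reduceAdd]
  constructor <;> ring
end
end
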